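/- Let X̃ = A*X + E for matrices A* ∈ ℝ^{n×n}, X ∈ ℝ^{n×T}, E ∈ ℝ^{n×T}, let K ⊆ ℝ^{n×n} be convex with A* ∈ K, and let Â minimize ‖X̃ - AX‖_F² over A ∈ K. Then for any B ∈ K: ‖(Â - B)X‖_F² ≤ ⟨(Â - B)X, E⟩ + ‖(A* - B)X‖_F · ‖(Â - B)X‖_F, where ⟨·,·⟩ is the Frobenius inner product. -/
import Mathlib


open Matrix

/-- Frobenius inner product ⟨M, N⟩ = Tr(Mᵀ N). -/
noncomputable def frobInner {n T : ℕ} (M N : Matrix (Fin n) (Fin T) ℝ) : ℝ :=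
  Matrix.trace (Mᵀ * N)

/-- Frobenius norm. -/
noncomputable def frobNorm {n T : ℕ} (M : Matrix (Fin n) (Fin T) ℝ) : ℝ :=
  Real.sqrt (∑ i, ∑ j, (M i j) ^ 2)

lemma frobInner_eq_sum {n T : ℕ} (M N : Matrix (Fin n) (Fin T) ℝ) :
    frobInner M N = ∑ i, ∑ j, M i j * N i j := by
  simp only [frobInner, Matrix.trace, Matrix.diag, Matrix.mul_apply, Matrix.transpose_apply]
  exact Finset.sum_comm

lemma frobNorm_sq {n T : ℕ} (M : Matrix (Fin n) (Fin T) ℝ) :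
    frobNorm M ^ 2 = frobInner M M := by
  rw [frobInner_eq_sum, frobNorm, Real.sq_sqrt]
  · simp [sq]
  · positivity

lemma frobInner_comm {n T : ℕ} (M N : Matrix (Fin n) (Fin T) ℝ) :
    frobInner M N = frobInner N M := by
  simp_rw [frobInner_eq_sum, mul_comm]

lemma frobInner_add_left {n T : ℕ} (M N P : Matrix (Fin n) (Fin T) ℝ) :
    frobInner (M + N) P = frobInner M P + frobInner N P := by
  simp [frobInner_eq_sum, add_mul, Finset.sum_add_distrib]

lemma frobInner_sub_left {n T : ℕ} (M N P : Matrix (Fin n) (Fin T) ℝ) :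
    frobInner (M - N) P = frobInner M P - frobInner N P := by
  simp [frobInner_eq_sum, sub_mul, Finset.sum_sub_distrib]

lemma frobInner_sub_right {n T : ℕ} (M N P : Matrix (Fin n) (Fin T) ℝ) :
    frobInner M (N - P) = frobInner M N - frobInner M P := by
  simp [frobInner_eq_sum, mul_sub, Finset.sum_sub_distrib]

lemma frobInner_smul_left {n T : ℕ} (c : ℝ) (M N : Matrix (Fin n) (Fin T) ℝ) :
    frobInner (c • M) N = c * frobInner M N := by
  simp [frobInner_eq_sum, Finset.mul_sum, mul_assoc]

lemma frobNorm_nonneg {n T : ℕ} (M : Matrix (Fin n) (Fin T) ℝ) : 0 ≤ frobNorm M :=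
  Real.sqrt_nonneg _

/-- Cauchy–Schwarz for the Frobenius inner product. -/
lemma expand_sub_smul {n T : ℕ} (c : ℝ) (M N : Matrix (Fin n) (Fin T) ℝ) :
    frobNorm (M - c • N) ^ 2 =
      frobNorm M ^ 2 - 2 * c * frobInner M N + c ^ 2 * frobInner N N := by
  rw [frobNorm_sq, frobNorm_sq]
  simp only [frobInner_eq_sum, Matrix.sub_apply, Matrix.smul_apply, smul_eq_mul]
  have h : ∀ i j, (M i j - c * N i j) * (M i j - c * N i j) =
      M i j * M i j - 2 * c * (M i j * N i j) + c ^ 2 * (N i j * N i j) :=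
    fun i j => by ring
  simp_rw [h, Finset.sum_add_distrib, Finset.sum_sub_distrib, ← Finset.mul_sum]

lemma frobInner_le {n T : ℕ} (M N : Matrix (Fin n) (Fin T) ℝ) :
    frobInner M N ≤ frobNorm M * frobNorm N := by
  have key : frobInner M N ^ 2 ≤ (frobNorm M * frobNorm N) ^ 2 := by
    rw [mul_pow, frobNorm_sq, frobNorm_sq, frobInner_eq_sum, frobInner_eq_sum,
      frobInner_eq_sum]
    have h := Finset.sum_mul_sq_le_sq_mul_sq (Finset.univ : Finset (Fin n × Fin T))
      (fun p => M p.1 p.2) (fun p => N p.1 p.2)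
    rw [Fintype.sum_prod_type, Fintype.sum_prod_type, Fintype.sum_prod_type] at h
    simpa [← sq] using h
  have h := Real.sqrt_le_sqrt key
  rw [Real.sqrt_sq_eq_abs, Real.sqrt_sq_eq_abs] at h
  exact (le_abs_self _).trans (h.trans_eq (abs_of_nonneg
    (mul_nonneg (frobNorm_nonneg M) (frobNorm_nonneg N))))

/-- Lemma 3.3 of the paper: basic inequality for the constrained
least squares estimator for `X̃ = A* X + E`. -/
theorem basic_inequality {n T : ℕ}
    (K : Set (Matrix (Fin n) (Fin n) ℝ)) (hK : Convex ℝ K)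
    (Astar : Matrix (Fin n) (Fin n) ℝ) (hAstar : Astar ∈ K)
    (X E : Matrix (Fin n) (Fin T) ℝ)
    (Xtil : Matrix (Fin n) (Fin T) ℝ) (hXtil : Xtil = Astar * X + E)
    (Ahat : Matrix (Fin n) (Fin n) ℝ) (hAhat : Ahat ∈ K)
    (hmin : ∀ A ∈ K, frobNorm (Xtil - Ahat * X) ^ 2 ≤ frobNorm (Xtil - A * X) ^ 2) :
    ∀ B ∈ K,
      frobNorm ((Ahat - B) * X) ^ 2 ≤
        frobInner ((Ahat - B) * X) E +
          frobNorm ((Astar - B) * X) * frobNorm ((Ahat - B) * X) := by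
  intro B hB
  set R : Matrix (Fin n) (Fin T) ℝ := Xtil - Ahat * X with hR
  set D : Matrix (Fin n) (Fin T) ℝ := (B - Ahat) * X with hD
  -- First-order optimality: ⟨R, D⟩ ≤ 0
  have key : frobInner R D ≤ 0 := by
    have hstep : ∀ t : ℝ, 0 < t → t ≤ 1 → 2 * frobInner R D ≤ t * frobInner D D := by
      intro t ht ht1
      have hmem : Ahat + t • (B - Ahat) ∈ K := by
        have := hK hAhat hB (a := 1 - t) (b := t) (by linarith) ht.le (by ring)
        convert this using 1
        simp [smul_sub, sub_smul]
        abel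
      have hle := hmin _ hmem
      have hrewrite : Xtil - (Ahat + t • (B - Ahat)) * X = R - t • D := by
        rw [hR, hD]
        simp [Matrix.add_mul, Matrix.smul_mul]
        abel
      rw [hrewrite] at hle
      rw [expand_sub_smul] at hle
      nlinarith
    rcases le_or_gt (frobInner R D) 0 with h | h
    · exact h
    · exfalso
      -- take t = min 1 (⟨R,D⟩ / (⟨D,D⟩ + 1))
      have hDD : 0 ≤ frobInner D D := by rw [← frobNorm_sq]; positivity
      set t : ℝ := min 1 (frobInner R D / (frobInner D D + 1)) with htdef
      have ht0 : 0 < t := lt_min one_pos (by positivity)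
      have ht1 : t ≤ 1 := min_le_left _ _
      have := hstep t ht0 ht1
      have htle : t * frobInner D D ≤ frobInner R D := by
        calc t * frobInner D D ≤ (frobInner R D / (frobInner D D + 1)) * frobInner D D := by
              apply mul_le_mul_of_nonneg_right (min_le_right _ _) hDD
          _ ≤ frobInner R D := by
              rw [div_mul_eq_mul_div, div_le_iff₀ (by linarith)]
              nlinarith
      linarith
  -- Now the algebra: R = (A* - Â)X + E, D = (B - Â)X
  have hRsplit : R = (Astar - Ahat) * X + E := by
    rw [hR, hXtil, Matrix.sub_mul]; abel
  have hDsplit : (Ahat - B) * X = -D := by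
    rw [hD, Matrix.sub_mul, Matrix.sub_mul]; abel
  have hsplit2 : (Ahat - B) * X = (Ahat - Astar) * X + (Astar - B) * X := by
    rw [Matrix.sub_mul, Matrix.sub_mul, Matrix.sub_mul]; abel
  have h1 : frobNorm ((Ahat - B) * X) ^ 2 =
      frobInner ((Ahat - Astar) * X) ((Ahat - B) * X) +
      frobInner ((Astar - B) * X) ((Ahat - B) * X) := by
    rw [frobNorm_sq]
    nth_rewrite 1 [hsplit2]
    rw [frobInner_add_left]
  have h2 : frobInner ((Ahat - Astar) * X) ((Ahat - B) * X) ≤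
      frobInner ((Ahat - B) * X) E := by
    -- key: ⟨(A*-Â)X + E, D⟩ ≤ 0 with D = (B-Â)X = -((Â-B)X)
    rw [hRsplit, frobInner_add_left] at key
    have e1 : frobInner ((Astar - Ahat) * X) D =
        frobInner ((Ahat - Astar) * X) ((Ahat - B) * X) := by
      rw [hDsplit]
      have : (Astar - Ahat) * X = -((Ahat - Astar) * X) := by
        rw [Matrix.sub_mul, Matrix.sub_mul]; abel
      rw [this]
      simp [frobInner_eq_sum, neg_mul, mul_neg]
    have e2 : frobInner E D = -frobInner ((Ahat - B) * X) E := by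
      rw [hDsplit, frobInner_comm]
      simp [frobInner_eq_sum, neg_mul]
    rw [e1, e2] at key
    linarith
  have h3 : frobInner ((Astar - B) * X) ((Ahat - B) * X) ≤
      frobNorm ((Astar - B) * X) * frobNorm ((Ahat - B) * X) := frobInner_le _ _
  linarith
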